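/- Let C ⊆ {0,1,2}^n be a code in which every three distinct codewords triffer in at least one position. Then the family of supports {σ(x) : x ∈ C} (as a multiset) has every set occurring with multiplicity at most 2, and its underlying set family is sunflower-free (contains no three distinct sets A, B, C such that A∩B = B∩C = A∩C). -/

import Mathlib

/-- Three ternary words `a`, `b`, `c` triffer at position `i` if their `i`-th
coordinates take all three values `0, 1, 2`. -/
def Triffers {n : ℕ} (a b c : Fin n → Fin 3) (i : Fin n) : Prop :=
  ({a i, b i, c i} : Finset (Fin 3)) = Finset.univ

instance {n : ℕ} (a b c : Fin n → Fin 3) (i : Fin n) : Decidable (Triffers a b c i) := by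
  unfold Triffers; infer_instance

/-- The number of positions where `a`, `b`, `c` triffer. -/
def trifferCount {n : ℕ} (a b c : Fin n → Fin 3) : ℕ :=
  (Finset.univ.filter fun i => Triffers a b c i).card

/-- A code is `m`-trifferent if every three distinct codewords triffer in at
least `m` positions. -/
def IsTrifferent {n : ℕ} (m : ℕ) (C : Finset (Fin n → Fin 3)) : Prop :=
  ∀ a ∈ C, ∀ b ∈ C, ∀ c ∈ C, a ≠ b → a ≠ c → b ≠ c → m ≤ trifferCount a b c

/-- `T n m` is the maximum size of an `m`-trifferent code of length `n`. -/
noncomputable def T (n m : ℕ) : ℕ :=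
  sSup {k | ∃ C : Finset (Fin n → Fin 3), IsTrifferent m C ∧ C.card = k}

/-- The support of a ternary word. -/
def supp {n : ℕ} (x : Fin n → Fin 3) : Finset (Fin n) :=
  Finset.univ.filter fun i => x i ≠ 0

/-- Among three distinct values in `Fin 3` exactly one is `0`, so a triffering position lies in
exactly two of the three supports: in one pairwise intersection of supports but not in the others. -/
lemma not_pairwise_nonzero_eq_of_triffer :
    ∀ p q r : Fin 3, ({p, q, r} : Finset (Fin 3)) = Finset.univ →
    ¬((p ≠ 0 ∧ q ≠ 0 ↔ q ≠ 0 ∧ r ≠ 0) ∧ (p ≠ 0 ∧ q ≠ 0 ↔ p ≠ 0 ∧ r ≠ 0)) := by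
  decide

lemma Triffers.not_supp_inter_eq {n : ℕ} {a b c : Fin n → Fin 3} {i : Fin n}
    (h : Triffers a b c i) :
    ¬(supp a ∩ supp b = supp b ∩ supp c ∧ supp a ∩ supp b = supp a ∩ supp c) := by
  rintro ⟨hbc, hac⟩
  refine not_pairwise_nonzero_eq_of_triffer _ _ _ h ⟨?_, ?_⟩
  · simpa [supp] using Finset.ext_iff.mp hbc i
  · simpa [supp] using Finset.ext_iff.mp hac i

lemma IsTrifferent.exists_triffers {n : ℕ} {C : Finset (Fin n → Fin 3)} (htr : IsTrifferent 1 C)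
    {a b c : Fin n → Fin 3} (ha : a ∈ C) (hb : b ∈ C) (hc : c ∈ C)
    (hab : a ≠ b) (hac : a ≠ c) (hbc : b ≠ c) : ∃ i, Triffers a b c i := by
  obtain ⟨i, hi⟩ := Finset.card_pos.mp (htr a ha b hb c hc hab hac hbc)
  exact ⟨i, (Finset.mem_filter.mp hi).2⟩

lemma IsTrifferent.not_supp_inter_eq {n : ℕ} {C : Finset (Fin n → Fin 3)}
    (htr : IsTrifferent 1 C) {a b c : Fin n → Fin 3} (ha : a ∈ C) (hb : b ∈ C) (hc : c ∈ C)
    (hab : a ≠ b) (hac : a ≠ c) (hbc : b ≠ c) :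
    ¬(supp a ∩ supp b = supp b ∩ supp c ∧ supp a ∩ supp b = supp a ∩ supp c) :=
  let ⟨_, hi⟩ := htr.exists_triffers ha hb hc hab hac hbc
  hi.not_supp_inter_eq

theorem stmt18 (n : ℕ) (C : Finset (Fin n → Fin 3)) (htr : IsTrifferent 1 C) :
    (∀ A : Finset (Fin n), (C.filter fun x => supp x = A).card ≤ 2) ∧
    (∀ A ∈ C.image supp, ∀ B ∈ C.image supp, ∀ D ∈ C.image supp,
      A ≠ B → A ≠ D → B ≠ D → ¬(A ∩ B = B ∩ D ∧ A ∩ B = A ∩ D)) := by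
  constructor
  · intro A
    by_contra! hcard
    obtain ⟨a, ha, b, hb, c, hc, hab, hac, hbc⟩ := Finset.two_lt_card.mp hcard
    simp only [Finset.mem_filter] at ha hb hc
    refine htr.not_supp_inter_eq ha.1 hb.1 hc.1 hab hac hbc ?_
    simp only [ha.2, hb.2, hc.2, and_self]
  · rintro _ hA _ hB _ hD hAB hAD hBD
    obtain ⟨a, ha, rfl⟩ := Finset.mem_image.mp hA
    obtain ⟨b, hb, rfl⟩ := Finset.mem_image.mp hB
    obtain ⟨c, hc, rfl⟩ := Finset.mem_image.mp hD
    exact htr.not_supp_inter_eq ha hb hc (ne_of_apply_ne _ hAB) (ne_of_apply_ne _ hAD)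
      (ne_of_apply_ne _ hBD)
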